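/- Tightening: let M be a simple term of type A containing no existential variables. (1) If (Γ, x:C); Ω; Δ ⊢ M ↓ A, then either Γ; Ω; (Δ, x:C) ⊢ M ↓ A or Γ; (Ω, x:C); Δ ⊢ M ↓ A. (2) If (Γ, x:C); Ω; Δ ⊢ M ⇑ A, then either Γ; Ω; (Δ, x:C) ⊢ M ⇑ A or Γ; (Ω, x:C); Δ ⊢ M ⇑ A. That is, every simple term is either strict or vacuous in each of its unrestricted variables. -/

import Mathlib

/- A strict λ-calculus with strict (1), irrelevant (0) and unrestricted (u)
   function spaces, in locally nameless representation.  Contexts are finite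
   sets of (variable name, type) declarations, split into three zones
   Γ (unrestricted); Ω (irrelevant); Δ (strict). -/

/-- Labels `k ::= 1 | 0 | u`. -/
inductive Lab : Type
  | one
  | zero
  | un
deriving DecidableEq

/-- Types `A ::= a | A₁ →ᵏ A₂` over atomic types `a` (names in ℕ). -/
inductive Ty : Type
  | atom : ℕ → Ty
  | arr : Ty → Lab → Ty → Ty
deriving DecidableEq

/-- Terms `M ::= c | x | λxᵏ:A.M | M Nᵏ` (locally nameless: bound variables
    are de Bruijn indices, free variables/parameters are names). -/
inductive Tm : Type
  | const : ℕ → Tm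
  | bvar : ℕ → Tm
  | fvar : ℕ → Tm
  | lam : Lab → Ty → Tm → Tm
  | app : Tm → Lab → Tm → Tm
deriving DecidableEq

/-- Opening: replace the bound variable `k` by the term `u`. -/
def Tm.openRec (k : ℕ) (u : Tm) : Tm → Tm
  | .const c => .const c
  | .bvar i => if i = k then u else .bvar i
  | .fvar x => .fvar x
  | .lam l A M => .lam l A (Tm.openRec (k+1) u M)
  | .app M l N => .app (Tm.openRec k u M) l (Tm.openRec k u N)

/-- `M.open0 N` is the body `M` of an abstraction with its bound variable
    replaced by `N`; since free variables are named, this is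
    capture-avoiding substitution of the bound variable by construction. -/
def Tm.open0 (M u : Tm) : Tm := Tm.openRec 0 u M

/-- A context zone: a finite set of declarations `x : A`. -/
abbrev Ctx : Type := Finset (ℕ × Ty)

/-- The variables declared in a context. -/
def Ctx.names (Γ : Ctx) : Finset ℕ := Γ.image Prod.fst

/-- The typing judgment `Γ; Ω; Δ ⊢ M : A` of the strict λ-calculus,
    over a fixed signature `Sg` assigning types to constants
    (a function, so each constant is declared at most once). -/
inductive Typ (Sg : ℕ → Option Ty) : Ctx → Ctx → Ctx → Tm → Ty → Prop
  | con {Γ Ω : Ctx} {c : ℕ} {A : Ty} :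
      Sg c = some A → Typ Sg Γ Ω ∅ (.const c) A
  | idu {Γ Ω : Ctx} {x : ℕ} {A : Ty} :
      (x, A) ∈ Γ → Typ Sg Γ Ω ∅ (.fvar x) A
  | id1 {Γ Ω : Ctx} {x : ℕ} {A : Ty} :
      Typ Sg Γ Ω {(x, A)} (.fvar x) A
  | lamu {Γ Ω Δ : Ctx} {x : ℕ} {A B : Ty} {M : Tm} :
      x ∉ Ctx.names (Γ ∪ Ω ∪ Δ) →
      Typ Sg (insert (x, A) Γ) Ω Δ (Tm.open0 M (.fvar x)) B →
      Typ Sg Γ Ω Δ (.lam .un A M) (.arr A .un B)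
  | lam0 {Γ Ω Δ : Ctx} {x : ℕ} {A B : Ty} {M : Tm} :
      x ∉ Ctx.names (Γ ∪ Ω ∪ Δ) →
      Typ Sg Γ (insert (x, A) Ω) Δ (Tm.open0 M (.fvar x)) B →
      Typ Sg Γ Ω Δ (.lam .zero A M) (.arr A .zero B)
  | lam1 {Γ Ω Δ : Ctx} {x : ℕ} {A B : Ty} {M : Tm} :
      x ∉ Ctx.names (Γ ∪ Ω ∪ Δ) →
      Typ Sg Γ Ω (insert (x, A) Δ) (Tm.open0 M (.fvar x)) B →
      Typ Sg Γ Ω Δ (.lam .one A M) (.arr A .one B)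
  | appu {Γ Ω Δ : Ctx} {M N : Tm} {A B : Ty} :
      Typ Sg Γ Ω Δ M (.arr A .un B) →
      Typ Sg (Γ ∪ Δ) Ω ∅ N A →
      Typ Sg Γ Ω Δ (.app M .un N) B
  | app0 {Γ Ω Δ : Ctx} {M N : Tm} {A B : Ty} :
      Typ Sg Γ Ω Δ M (.arr A .zero B) →
      Typ Sg (Γ ∪ Ω ∪ Δ) ∅ ∅ N A →
      Typ Sg Γ Ω Δ (.app M .zero N) B
  | app1 {Γ Ω ΔM ΔN : Ctx} {M N : Tm} {A B : Ty} :
      Disjoint ΔM ΔN →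
      Typ Sg (Γ ∪ ΔN) Ω ΔM M (.arr A .one B) →
      Typ Sg (Γ ∪ ΔM) Ω ΔN N A →
      Typ Sg Γ Ω (ΔM ∪ ΔN) (.app M .one N) B

mutual
  /-- `Γ; Ω; Δ ⊢ M ↓ A` : `M` is atomic of type `A`. -/
  inductive Atom (Sg : ℕ → Option Ty) : Ctx → Ctx → Ctx → Tm → Ty → Prop
    | con {Γ Ω : Ctx} {c : ℕ} {A : Ty} :
        Sg c = some A → Atom Sg Γ Ω ∅ (.const c) A
    | idu {Γ Ω : Ctx} {x : ℕ} {A : Ty} :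
        (x, A) ∈ Γ → Atom Sg Γ Ω ∅ (.fvar x) A
    | id1 {Γ Ω : Ctx} {x : ℕ} {A : Ty} :
        Atom Sg Γ Ω {(x, A)} (.fvar x) A
    | appu {Γ Ω Δ : Ctx} {M N : Tm} {A B : Ty} :
        Atom Sg Γ Ω Δ M (.arr A .un B) →
        Canon Sg (Γ ∪ Δ) Ω ∅ N A →
        Atom Sg Γ Ω Δ (.app M .un N) B
    | app0 {Γ Ω Δ : Ctx} {M N : Tm} {A B : Ty} :
        Atom Sg Γ Ω Δ M (.arr A .zero B) →
        Canon Sg (Γ ∪ Ω ∪ Δ) ∅ ∅ N A →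
        Atom Sg Γ Ω Δ (.app M .zero N) B
    | app1 {Γ Ω ΔM ΔN : Ctx} {M N : Tm} {A B : Ty} :
        Disjoint ΔM ΔN →
        Atom Sg (Γ ∪ ΔN) Ω ΔM M (.arr A .one B) →
        Canon Sg (Γ ∪ ΔM) Ω ΔN N A →
        Atom Sg Γ Ω (ΔM ∪ ΔN) (.app M .one N) B

  /-- `Γ; Ω; Δ ⊢ M ⇑ A` : `M` is canonical of type `A`. -/
  inductive Canon (Sg : ℕ → Option Ty) : Ctx → Ctx → Ctx → Tm → Ty → Prop
    | atm {Γ Ω Δ : Ctx} {M : Tm} {a : ℕ} :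
        Atom Sg Γ Ω Δ M (.atom a) → Canon Sg Γ Ω Δ M (.atom a)
    | lamu {Γ Ω Δ : Ctx} {x : ℕ} {A B : Ty} {M : Tm} :
        x ∉ Ctx.names (Γ ∪ Ω ∪ Δ) →
        Canon Sg (insert (x, A) Γ) Ω Δ (Tm.open0 M (.fvar x)) B →
        Canon Sg Γ Ω Δ (.lam .un A M) (.arr A .un B)
    | lam0 {Γ Ω Δ : Ctx} {x : ℕ} {A B : Ty} {M : Tm} :
        x ∉ Ctx.names (Γ ∪ Ω ∪ Δ) →
        Canon Sg Γ (insert (x, A) Ω) Δ (Tm.open0 M (.fvar x)) B →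
        Canon Sg Γ Ω Δ (.lam .zero A M) (.arr A .zero B)
    | lam1 {Γ Ω Δ : Ctx} {x : ℕ} {A B : Ty} {M : Tm} :
        x ∉ Ctx.names (Γ ∪ Ω ∪ Δ) →
        Canon Sg Γ Ω (insert (x, A) Δ) (Tm.open0 M (.fvar x)) B →
        Canon Sg Γ Ω Δ (.lam .one A M) (.arr A .one B)
end

/-- `h M₁¹ … Mₙ¹`: a spine of strict applications. -/
def Tm.spine (h : Tm) (Ms : List Tm) : Tm :=
  Ms.foldl (fun t M => Tm.app t .one M) h

/-- Heads of simple terms: constants or variables. -/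
inductive SimpleHead : Tm → Prop
  | const (c : ℕ) : SimpleHead (.const c)
  | fvar (x : ℕ) : SimpleHead (.fvar x)
  | bvar (i : ℕ) : SimpleHead (.bvar i)

/-- Simple terms containing no existential variables:
    `M ::= λxᵘ:A.M | h M₁¹ … Mₙ¹`. -/
inductive IsSimple : Tm → Prop
  | lam {A : Ty} {M : Tm} : IsSimple M → IsSimple (.lam .un A M)
  | spine {h : Tm} {Ms : List Tm} :
      SimpleHead h → (∀ M ∈ Ms, IsSimple M) →
      IsSimple (Tm.spine h Ms)

/-! Induction on the typing derivation, generalized over the unrestricted zone. Simplicity rules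
out irrelevant and unrestricted applications and non-unrestricted abstractions, so only heads,
strict applications and unrestricted abstractions remain. A head is strict in `x` exactly when
it is `x`; a strict application is strict in `x` as soon as one of its two parts is, and the
disjointness side condition holds because `x` is fresh. -/

@[simp]
lemma Ctx.names_union (Γ Δ : Ctx) : Ctx.names (Γ ∪ Δ) = Ctx.names Γ ∪ Ctx.names Δ :=
  Finset.image_union _ _

@[simp]
lemma Ctx.names_insert (p : ℕ × Ty) (Γ : Ctx) :
    Ctx.names (insert p Γ) = insert p.1 (Ctx.names Γ) :=
  Finset.image_insert _ _ _

lemma Ctx.notMem_of_notMem_names {x : ℕ} {A : Ty} {Γ : Ctx} (h : x ∉ Ctx.names Γ) :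
    (x, A) ∉ Γ :=
  fun hm => h (Finset.mem_image_of_mem _ hm)

lemma Tm.spine_nil_or_snoc (h : Tm) (Ms : List Tm) :
    (Ms = [] ∧ Tm.spine h Ms = h) ∨
      ∃ Ms' N, Ms = Ms' ++ [N] ∧ Tm.spine h Ms = .app (Tm.spine h Ms') .one N := by
  induction Ms using List.reverseRecOn with
  | nil => exact .inl ⟨rfl, rfl⟩
  | append_singleton Ms' N _ => exact .inr ⟨Ms', N, rfl, by simp [Tm.spine]⟩

lemma Tm.openRec_spine (k : ℕ) (u h : Tm) (Ms : List Tm) :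
    Tm.openRec k u (Tm.spine h Ms) = Tm.spine (Tm.openRec k u h) (Ms.map (Tm.openRec k u)) := by
  induction Ms generalizing h with
  | nil => rfl
  | cons M Ms ih => exact ih (.app h .one M)

lemma SimpleHead.openRec {h : Tm} (hh : SimpleHead h) (k y : ℕ) :
    SimpleHead (Tm.openRec k (.fvar y) h) := by
  cases hh with
  | const c => exact .const c
  | fvar x => exact .fvar x
  | bvar i =>
    unfold Tm.openRec
    split
    · exact .fvar y
    · exact .bvar i

lemma IsSimple.openRec {M : Tm} (hM : IsSimple M) (k y : ℕ) :
    IsSimple (Tm.openRec k (.fvar y) M) := by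
  induction hM generalizing k with
  | lam _ ih => exact .lam (ih (k + 1))
  | spine hh _ ih =>
    rw [Tm.openRec_spine]
    refine .spine (hh.openRec k y) ?_
    simp only [List.mem_map]
    rintro _ ⟨M, hM, rfl⟩
    exact ih M hM k

lemma IsSimple.lam_inv {l : Lab} {A : Ty} {M : Tm} (hS : IsSimple (.lam l A M)) :
    l = .un ∧ IsSimple M := by
  generalize hT : Tm.lam l A M = T at hS
  cases hS with
  | lam hM => cases hT; exact ⟨rfl, hM⟩
  | @spine h Ms hh _ =>
    rcases Tm.spine_nil_or_snoc h Ms with ⟨-, he⟩ | ⟨_, _, -, he⟩ <;> rw [← hT] at he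
    · subst he; cases hh
    · cases he

lemma IsSimple.app_inv {l : Lab} {M N : Tm} (hS : IsSimple (.app M l N)) :
    l = .one ∧ IsSimple M ∧ IsSimple N := by
  generalize hT : Tm.app M l N = T at hS
  cases hS with
  | lam _ => cases hT
  | @spine h Ms hh hMs =>
    rcases Tm.spine_nil_or_snoc h Ms with ⟨-, he⟩ | ⟨Ms', _, rfl, he⟩ <;> rw [← hT] at he
    · subst he; cases hh
    · cases he
      exact ⟨rfl, .spine hh fun M hM => hMs M (by simp [hM]), hMs _ (by simp)⟩

variable (Sg : ℕ → Option Ty)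

/-- Tightening for atomic terms, with the unrestricted zone `Γ'` left general so that it can serve
as a motive for the mutual induction on typing derivations. -/
def AtomTightens (Γ' Ω Δ : Ctx) (M : Tm) (A : Ty) : Prop :=
  ∀ (Γ : Ctx) (x : ℕ) (C : Ty), Γ' = insert (x, C) Γ → x ∉ Ctx.names (Γ ∪ Ω ∪ Δ) →
    IsSimple M →
    Atom Sg Γ Ω (insert (x, C) Δ) M A ∨ Atom Sg Γ (insert (x, C) Ω) Δ M A

def CanonTightens (Γ' Ω Δ : Ctx) (M : Tm) (A : Ty) : Prop :=
  ∀ (Γ : Ctx) (x : ℕ) (C : Ty), Γ' = insert (x, C) Γ → x ∉ Ctx.names (Γ ∪ Ω ∪ Δ) →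
    IsSimple M →
    Canon Sg Γ Ω (insert (x, C) Δ) M A ∨ Canon Sg Γ (insert (x, C) Ω) Δ M A

variable {Sg}

lemma atomTightens_of_not_isSimple {Γ' Ω Δ : Ctx} {M : Tm} {A : Ty} (hM : ¬ IsSimple M) :
    AtomTightens Sg Γ' Ω Δ M A :=
  fun _ _ _ _ _ hS => absurd hS hM

lemma canonTightens_of_not_isSimple {Γ' Ω Δ : Ctx} {M : Tm} {A : Ty} (hM : ¬ IsSimple M) :
    CanonTightens Sg Γ' Ω Δ M A :=
  fun _ _ _ _ _ hS => absurd hS hM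

lemma atomTightens_const {Γ' Ω : Ctx} {c : ℕ} {A : Ty} (hc : Sg c = some A) :
    AtomTightens Sg Γ' Ω ∅ (.const c) A :=
  fun _ _ _ _ _ _ => .inr (.con hc)

lemma atomTightens_fvar_of_mem {Γ' Ω : Ctx} {y : ℕ} {A : Ty} (hy : (y, A) ∈ Γ') :
    AtomTightens Sg Γ' Ω ∅ (.fvar y) A := by
  rintro Γ x C rfl - -
  rcases Finset.mem_insert.mp hy with heq | hyΓ
  · cases heq
    exact .inl .id1
  · exact .inr (.idu hyΓ)

lemma atomTightens_fvar_strict {Γ' Ω : Ctx} {y : ℕ} {A : Ty} :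
    AtomTightens Sg Γ' Ω {(y, A)} (.fvar y) A :=
  fun _ _ _ _ _ _ => .inr .id1

lemma atomTightens_app_one {Γ' Ω ΔM ΔN : Ctx} {M N : Tm} {A B : Ty} (hd : Disjoint ΔM ΔN)
    (hM : Atom Sg (Γ' ∪ ΔN) Ω ΔM M (.arr A .one B)) (hN : Canon Sg (Γ' ∪ ΔM) Ω ΔN N A)
    (ihM : AtomTightens Sg (Γ' ∪ ΔN) Ω ΔM M (.arr A .one B))
    (ihN : CanonTightens Sg (Γ' ∪ ΔM) Ω ΔN N A) :
    AtomTightens Sg Γ' Ω (ΔM ∪ ΔN) (.app M .one N) B := by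
  rintro Γ x C rfl hx hS
  obtain ⟨-, hSM, hSN⟩ := hS.app_inv
  simp only [Ctx.names_union, Finset.mem_union, not_or] at hx
  rcases ihN (Γ ∪ ΔM) x C (Finset.insert_union _ _ _) (by simp [hx]) hSN with hNs | hNo
  · left
    rw [← Finset.union_insert]
    refine .app1 (Finset.disjoint_insert_right.mpr ⟨Ctx.notMem_of_notMem_names hx.2.1, hd⟩)
      ?_ hNs
    rwa [Finset.union_insert, ← Finset.insert_union]
  rcases ihM (Γ ∪ ΔN) x C (Finset.insert_union _ _ _) (by simp [hx]) hSM with hMs | hMo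
  · left
    rw [← Finset.insert_union]
    refine .app1 (Finset.disjoint_insert_left.mpr ⟨Ctx.notMem_of_notMem_names hx.2.2, hd⟩)
      hMs ?_
    rwa [Finset.union_insert, ← Finset.insert_union]
  · exact .inr (.app1 hd hMo hNo)

lemma canonTightens_of_atomTightens {Γ' Ω Δ : Ctx} {M : Tm} {a : ℕ}
    (ih : AtomTightens Sg Γ' Ω Δ M (.atom a)) : CanonTightens Sg Γ' Ω Δ M (.atom a) :=
  fun Γ x C hΓ hx hS => (ih Γ x C hΓ hx hS).imp .atm .atm

lemma canonTightens_lam_un {Γ' Ω Δ : Ctx} {y : ℕ} {A B : Ty} {M : Tm}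
    (hy : y ∉ Ctx.names (Γ' ∪ Ω ∪ Δ))
    (ih : CanonTightens Sg (insert (y, A) Γ') Ω Δ (Tm.open0 M (.fvar y)) B) :
    CanonTightens Sg Γ' Ω Δ (.lam .un A M) (.arr A .un B) := by
  rintro Γ x C rfl hx hS
  rcases ih (insert (y, A) Γ) x C (Finset.insert_comm _ _ _)
      (by grind [Ctx.names_union, Ctx.names_insert]) (hS.lam_inv.2.openRec 0 y) with hb | hb
  · exact .inl (.lamu (by grind [Ctx.names_union, Ctx.names_insert]) hb)
  · exact .inr (.lamu (by grind [Ctx.names_union, Ctx.names_insert]) hb)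

theorem Atom.tightens {Γ' Ω Δ : Ctx} {M : Tm} {A : Ty} (h : Atom Sg Γ' Ω Δ M A) :
    AtomTightens Sg Γ' Ω Δ M A :=
  Atom.rec (motive_1 := fun Γ' Ω Δ M A _ => AtomTightens Sg Γ' Ω Δ M A)
    (motive_2 := fun Γ' Ω Δ M A _ => CanonTightens Sg Γ' Ω Δ M A)
    atomTightens_const atomTightens_fvar_of_mem atomTightens_fvar_strict
    (fun _ _ _ _ => atomTightens_of_not_isSimple fun hS => nomatch hS.app_inv.1)
    (fun _ _ _ _ => atomTightens_of_not_isSimple fun hS => nomatch hS.app_inv.1)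
    atomTightens_app_one
    (fun _ => canonTightens_of_atomTightens)
    (fun hy _ => canonTightens_lam_un hy)
    (fun _ _ _ => canonTightens_of_not_isSimple fun hS => nomatch hS.lam_inv.1)
    (fun _ _ _ => canonTightens_of_not_isSimple fun hS => nomatch hS.lam_inv.1)
    h

theorem Canon.tightens {Γ' Ω Δ : Ctx} {M : Tm} {A : Ty} (h : Canon Sg Γ' Ω Δ M A) :
    CanonTightens Sg Γ' Ω Δ M A :=
  Canon.rec (motive_1 := fun Γ' Ω Δ M A _ => AtomTightens Sg Γ' Ω Δ M A)
    (motive_2 := fun Γ' Ω Δ M A _ => CanonTightens Sg Γ' Ω Δ M A)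
    atomTightens_const atomTightens_fvar_of_mem atomTightens_fvar_strict
    (fun _ _ _ _ => atomTightens_of_not_isSimple fun hS => nomatch hS.app_inv.1)
    (fun _ _ _ _ => atomTightens_of_not_isSimple fun hS => nomatch hS.app_inv.1)
    atomTightens_app_one
    (fun _ => canonTightens_of_atomTightens)
    (fun hy _ => canonTightens_lam_un hy)
    (fun _ _ _ => canonTightens_of_not_isSimple fun hS => nomatch hS.lam_inv.1)
    (fun _ _ _ => canonTightens_of_not_isSimple fun hS => nomatch hS.lam_inv.1)
    h

/-- **Tightening.**  Let `M` be a simple term (with no existential variables).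
    (1) If `(Γ, x:C); Ω; Δ ⊢ M ↓ A`, then either `Γ; Ω; (Δ, x:C) ⊢ M ↓ A`
        or `Γ; (Ω, x:C); Δ ⊢ M ↓ A`.
    (2) If `(Γ, x:C); Ω; Δ ⊢ M ⇑ A`, then either `Γ; Ω; (Δ, x:C) ⊢ M ⇑ A`
        or `Γ; (Ω, x:C); Δ ⊢ M ⇑ A`.
    That is, every simple term is either strict or vacuous in each of its
    unrestricted variables. -/
theorem tightening (Sg : ℕ → Option Ty) :
    (∀ (M : Tm), IsSimple M →
      ∀ (Γ Ω Δ : Ctx) (x : ℕ) (C A : Ty), x ∉ Ctx.names (Γ ∪ Ω ∪ Δ) →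
        Atom Sg (insert (x, C) Γ) Ω Δ M A →
        (Atom Sg Γ Ω (insert (x, C) Δ) M A ∨
         Atom Sg Γ (insert (x, C) Ω) Δ M A)) ∧
    (∀ (M : Tm), IsSimple M →
      ∀ (Γ Ω Δ : Ctx) (x : ℕ) (C A : Ty), x ∉ Ctx.names (Γ ∪ Ω ∪ Δ) →
        Canon Sg (insert (x, C) Γ) Ω Δ M A →
        (Canon Sg Γ Ω (insert (x, C) Δ) M A ∨
         Canon Sg Γ (insert (x, C) Ω) Δ M A)) :=
  ⟨fun _ hS Γ _ _ x C _ hx h => h.tightens Γ x C rfl hx hS,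
    fun _ hS Γ _ _ x C _ hx h => h.tightens Γ x C rfl hx hS⟩
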